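/- Validity of declarative Fω..: (1) if Γ ⊢ A : K then Γ ⊢ K kd; (2) if Γ ⊢ t : A then Γ ⊢ A : ∗; (3) if Γ ⊢ J ≤ K or Γ ⊢ J = K then Γ ⊢ J kd and Γ ⊢ K kd; (4) if Γ ⊢ A ≤ B : K or Γ ⊢ A = B : K then Γ ⊢ A : K and Γ ⊢ B : K. -/

import Mathlib

set_option autoImplicit true
set_option maxHeartbeats 1000000
set_option linter.unusedVariables false

/-- Shapes (simple kinds): `k ::= ∗ | k → k`. -/
inductive SKind : Type
  | star
  | arr (j k : SKind)
/-! ## Ordinary (direct) syntax of Fω.., de Bruijn representation.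
A single namespace of variables is used for both term and type variables;
contexts record which bindings are term bindings and which are type bindings. -/

mutual
/-- Types of Fω..: `A ::= X | ⊤ | ⊥ | A → B | ∀X:K.A | λX:K.A | A B`. -/
inductive Ty : Type
  | var (x : ℕ)
  | top
  | bot
  | arr (a b : Ty)
  | all (k : Kd) (a : Ty)
  | lam (k : Kd) (a : Ty)
  | app (a b : Ty)

/-- Kinds of Fω..: `K ::= A..B | (X:J)→K`. -/
inductive Kd : Type
  | intv (a b : Ty)
  | pi (j : Kd) (k : Kd)
end

/-- Terms of Fω..: `t ::= x | λx:A.t | s t | ΛX:K.t | t A`. -/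
inductive Tm : Type
  | var (x : ℕ)
  | lam (a : Ty) (t : Tm)
  | app (s t : Tm)
  | tlam (k : Kd) (t : Tm)
  | tapp (t : Tm) (a : Ty)

mutual
/-- Shift (weakening): increment all variables `≥ c` by one. -/
def Ty.shift (c : ℕ) : Ty → Ty
  | .var x => if x < c then .var x else .var (x + 1)
  | .top => .top
  | .bot => .bot
  | .arr a b => .arr (a.shift c) (b.shift c)
  | .all k a => .all (k.shift c) (a.shift (c + 1))
  | .lam k a => .lam (k.shift c) (a.shift (c + 1))
  | .app a b => .app (a.shift c) (b.shift c)

def Kd.shift (c : ℕ) : Kd → Kd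
  | .intv a b => .intv (a.shift c) (b.shift c)
  | .pi j k => .pi (j.shift c) (k.shift (c + 1))
end

mutual
/-- Capture-avoiding substitution of the type `v` for type variable `x` in a type. -/
def Ty.subst : Ty → ℕ → Ty → Ty
  | .var y, x, v => if y = x then v else if x < y then .var (y - 1) else .var y
  | .top, _, _ => .top
  | .bot, _, _ => .bot
  | .arr a b, x, v => .arr (a.subst x v) (b.subst x v)
  | .all k a, x, v => .all (k.subst x v) (a.subst (x + 1) (v.shift 0))
  | .lam k a, x, v => .lam (k.subst x v) (a.subst (x + 1) (v.shift 0))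
  | .app a b, x, v => .app (a.subst x v) (b.subst x v)

/-- Capture-avoiding substitution of the type `v` for type variable `x` in a kind. -/
def Kd.subst : Kd → ℕ → Ty → Kd
  | .intv a b, x, v => .intv (a.subst x v) (b.subst x v)
  | .pi j k, x, v => .pi (j.subst x v) (k.subst (x + 1) (v.shift 0))
end

/-- Shift on terms (single variable namespace: every binder shifts). -/
def Tm.shift (c : ℕ) : Tm → Tm
  | .var x => if x < c then .var x else .var (x + 1)
  | .lam a t => .lam (a.shift c) (t.shift (c + 1))
  | .app s t => .app (s.shift c) (t.shift c)
  | .tlam k t => .tlam (k.shift c) (t.shift (c + 1))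
  | .tapp t a => .tapp (t.shift c) (a.shift c)

/-- Capture-avoiding substitution of the type `v` for type variable `x` in a term. -/
def Tm.substTy : Tm → ℕ → Ty → Tm
  | .var y, x, _ => if x < y then .var (y - 1) else .var y
  | .lam a t, x, v => .lam (a.subst x v) (t.substTy (x + 1) (v.shift 0))
  | .app s t, x, v => .app (s.substTy x v) (t.substTy x v)
  | .tlam k t, x, v => .tlam (k.subst x v) (t.substTy (x + 1) (v.shift 0))
  | .tapp t a, x, v => .tapp (t.substTy x v) (a.subst x v)

mutual
/-- Strengthening used when substituting a *term* for a variable: type variables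
cannot be hit, only renumbered. -/
def Ty.strTm (x : ℕ) : Ty → Ty
  | .var y => if x < y then .var (y - 1) else .var y
  | .top => .top
  | .bot => .bot
  | .arr a b => .arr (a.strTm x) (b.strTm x)
  | .all k a => .all (k.strTm x) (a.strTm (x + 1))
  | .lam k a => .lam (k.strTm x) (a.strTm (x + 1))
  | .app a b => .app (a.strTm x) (b.strTm x)

def Kd.strTm (x : ℕ) : Kd → Kd
  | .intv a b => .intv (a.strTm x) (b.strTm x)
  | .pi j k => .pi (j.strTm x) (k.strTm (x + 1))
end

/-- Capture-avoiding substitution of the term `v` for term variable `x` in a term. -/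
def Tm.subst : Tm → ℕ → Tm → Tm
  | .var y, x, v => if y = x then v else if x < y then .var (y - 1) else .var y
  | .lam a t, x, v => .lam (a.strTm x) (t.subst (x + 1) (v.shift 0))
  | .app s t, x, v => .app (s.subst x v) (t.subst x v)
  | .tlam k t, x, v => .tlam (k.strTm x) (t.subst (x + 1) (v.shift 0))
  | .tapp t a, x, v => .tapp (t.subst x v) (a.strTm x)

/-- Shape (simple-kind) erasure of kinds: `|A..B| = ∗`, `|(X:J)→K| = |J| → |K|`. -/
def Kd.shape : Kd → SKind
  | .intv _ _ => .star
  | .pi j k => .arr j.shape k.shape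
/-! ## The declarative system of Fω.. -/

/-- Context bindings: type-variable bindings `X : K` and term-variable
bindings `x : A`. -/
inductive OBind : Type
  | ty (k : Kd)
  | tm (a : Ty)

/-- Typing contexts (innermost binding first, de Bruijn style). -/
abbrev Ctx := List OBind

/-- The kind `∗` of proper types: `∗ := ⊥..⊤`. -/
def Kd.star : Kd := .intv .bot .top

/-- Weakening by `n` innermost variables. -/
def Kd.weaken (n : ℕ) (k : Kd) : Kd := (Kd.shift 0)^[n] k

/-- Weakening by `n` innermost variables. -/
def Ty.weaken (n : ℕ) (a : Ty) : Ty := (Ty.shift 0)^[n] a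

mutual
/-- Context formation `Γ ctx`. -/
inductive CtxWf : Ctx → Prop
  | nil : CtxWf []
  | ty : CtxWf Γ → KdWf Γ K → CtxWf (.ty K :: Γ)
  | tm : CtxWf Γ → Kinding Γ A Kd.star → CtxWf (.tm A :: Γ)

/-- Kind formation `Γ ⊢ K kd`. -/
inductive KdWf : Ctx → Kd → Prop
  | intv : Kinding Γ A Kd.star → Kinding Γ B Kd.star → KdWf Γ (.intv A B)
  | pi : KdWf Γ J → KdWf (.ty J :: Γ) K → KdWf Γ (.pi J K)

/-- Kinding `Γ ⊢ A : K`. -/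
inductive Kinding : Ctx → Ty → Kd → Prop
  | var : CtxWf Γ → Γ[x]? = some (.ty K) → Kinding Γ (.var x) (K.weaken (x + 1))
  | top : CtxWf Γ → Kinding Γ .top Kd.star
  | bot : CtxWf Γ → Kinding Γ .bot Kd.star
  | arr : Kinding Γ A Kd.star → Kinding Γ B Kd.star → Kinding Γ (.arr A B) Kd.star
  | abs : KdWf Γ J → Kinding (.ty J :: Γ) A K → Kinding Γ (.lam J A) (.pi J K)
  | sing : Kinding Γ A (.intv B C) → Kinding Γ A (.intv A A)
  | all : KdWf Γ K → Kinding (.ty K :: Γ) A Kd.star → Kinding Γ (.all K A) Kd.star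
  | app : Kinding Γ A (.pi J K) → Kinding Γ B J → Kinding Γ (.app A B) (K.subst 0 B)
  | sub : Kinding Γ A J → SubKd Γ J K → Kinding Γ A K

/-- Typing `Γ ⊢ t : A`. -/
inductive Typing : Ctx → Tm → Ty → Prop
  | var : CtxWf Γ → Γ[x]? = some (.tm A) → Typing Γ (.var x) (A.weaken (x + 1))
  | abs : Kinding Γ A Kd.star → Kinding Γ B Kd.star →
      Typing (.tm A :: Γ) t (B.shift 0) → Typing Γ (.lam A t) (.arr A B)
  | app : Typing Γ s (.arr A B) → Typing Γ t A → Typing Γ (.app s t) B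
  | tabs : KdWf Γ K → Typing (.ty K :: Γ) t A → Typing Γ (.tlam K t) (.all K A)
  | tapp : Typing Γ t (.all K A) → Kinding Γ B K → Typing Γ (.tapp t B) (A.subst 0 B)
  | sub : Typing Γ t A → SubTy Γ A B Kd.star → Typing Γ t B

/-- Subkinding `Γ ⊢ J ≤ K`. -/
inductive SubKd : Ctx → Kd → Kd → Prop
  | intv : SubTy Γ A₂ A₁ Kd.star → SubTy Γ B₁ B₂ Kd.star →
      SubKd Γ (.intv A₁ B₁) (.intv A₂ B₂)
  | pi : KdWf Γ (.pi J₁ K₁) → SubKd Γ J₂ J₁ → SubKd (.ty J₂ :: Γ) K₁ K₂ →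
      SubKd Γ (.pi J₁ K₁) (.pi J₂ K₂)

/-- Subtyping `Γ ⊢ A ≤ B : K`. -/
inductive SubTy : Ctx → Ty → Ty → Kd → Prop
  | refl : Kinding Γ A K → SubTy Γ A A K
  | trans : SubTy Γ A B K → SubTy Γ B C K → SubTy Γ A C K
  | top : Kinding Γ A (.intv B C) → SubTy Γ A .top Kd.star
  | bot : Kinding Γ A (.intv B C) → SubTy Γ .bot A Kd.star
  | beta₁ : Kinding (.ty J :: Γ) A K → Kinding Γ B J →
      SubTy Γ (.app (.lam J A) B) (A.subst 0 B) (K.subst 0 B)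
  | beta₂ : Kinding (.ty J :: Γ) A K → Kinding Γ B J →
      SubTy Γ (A.subst 0 B) (.app (.lam J A) B) (K.subst 0 B)
  | eta₁ : Kinding Γ A (.pi J K) →
      SubTy Γ (.lam J (.app (A.shift 0) (.var 0))) A (.pi J K)
  | eta₂ : Kinding Γ A (.pi J K) →
      SubTy Γ A (.lam J (.app (A.shift 0) (.var 0))) (.pi J K)
  | arr : SubTy Γ A₂ A₁ Kd.star → SubTy Γ B₁ B₂ Kd.star →
      SubTy Γ (.arr A₁ B₁) (.arr A₂ B₂) Kd.star
  | abs : Kinding Γ (.lam J₁ A₁) (.pi J K) → Kinding Γ (.lam J₂ A₂) (.pi J K) →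
      SubTy (.ty J :: Γ) A₁ A₂ K → SubTy Γ (.lam J₁ A₁) (.lam J₂ A₂) (.pi J K)
  | all : Kinding Γ (.all K₁ A₁) Kd.star → SubKd Γ K₂ K₁ →
      SubTy (.ty K₂ :: Γ) A₁ A₂ Kd.star →
      SubTy Γ (.all K₁ A₁) (.all K₂ A₂) Kd.star
  | app : SubTy Γ A₁ A₂ (.pi J K) → TyEq Γ B₁ B₂ J →
      SubTy Γ (.app A₁ B₁) (.app A₂ B₂) (K.subst 0 B₁)
  | bnd₁ : Kinding Γ A (.intv B₁ B₂) → SubTy Γ B₁ A Kd.star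
  | bnd₂ : Kinding Γ A (.intv B₁ B₂) → SubTy Γ A B₂ Kd.star
  | intv : SubTy Γ A₁ A₂ (.intv B C) → SubTy Γ A₁ A₂ (.intv A₁ A₂)
  | sub : SubTy Γ A₁ A₂ J → SubKd Γ J K → SubTy Γ A₁ A₂ K

/-- Kind equality `Γ ⊢ J = K`, defined by antisymmetry of subkinding. -/
inductive KdEq : Ctx → Kd → Kd → Prop
  | antisym : SubKd Γ J K → SubKd Γ K J → KdEq Γ J K

/-- Type equality `Γ ⊢ A = B : K`, defined by antisymmetry of subtyping. -/
inductive TyEq : Ctx → Ty → Ty → Kd → Prop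
  | antisym : SubTy Γ A B K → SubTy Γ B A K → TyEq Γ A B K
end

/-
Validity follows from *functionality*. Write `Γ' ⊢ σ₁ = σ₂ : E` when two substitutions agree
pointwise, as equal types at the kinds that `E` prescribes. Then every type well-kinded in `E`
has equal instances under `σ₁` and `σ₂`, every well-formed kind has equal well-formed
instances, and every judgment is preserved by substitution. One simultaneous induction over
derivations proves all of this, and validity is the instance `σ₁ = σ₂ = id`. The induction goes
through because functionality of a kind `(X : J) → K` includes functionality of `J` and of `K`,
which the application and β-cases need, and because functionality is preserved by any
substitution that maps equal substitutions to equal ones, which handles the codomain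
instance `K[X := B]`.
-/

set_option autoImplicit false

abbrev Ren : Type := ℕ → ℕ

def Ren.lift (r : Ren) : Ren
  | 0 => 0
  | i + 1 => r i + 1

def Ren.shift (c : ℕ) : Ren := fun i => if i < c then i else i + 1

mutual
def Ty.ren : Ty → Ren → Ty
  | .var x, r => .var (r x)
  | .top, _ => .top
  | .bot, _ => .bot
  | .arr a b, r => .arr (a.ren r) (b.ren r)
  | .all k a, r => .all (k.ren r) (a.ren r.lift)
  | .lam k a, r => .lam (k.ren r) (a.ren r.lift)
  | .app a b, r => .app (a.ren r) (b.ren r)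

def Kd.ren : Kd → Ren → Kd
  | .intv a b, r => .intv (a.ren r) (b.ren r)
  | .pi j k, r => .pi (j.ren r) (k.ren r.lift)
end

abbrev Subst : Type := ℕ → Ty

def Subst.lift (σ : Subst) : Subst
  | 0 => .var 0
  | i + 1 => (σ i).ren Nat.succ

def Subst.cons (b : Ty) (σ : Subst) : Subst
  | 0 => b
  | i + 1 => σ i

def Subst.single (x : ℕ) (v : Ty) : Subst := fun i =>
  if i = x then v else if x < i then .var (i - 1) else .var i

mutual
def Ty.psubst : Ty → Subst → Ty
  | .var x, σ => σ x
  | .top, _ => .top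
  | .bot, _ => .bot
  | .arr a b, σ => .arr (a.psubst σ) (b.psubst σ)
  | .all k a, σ => .all (k.psubst σ) (a.psubst σ.lift)
  | .lam k a, σ => .lam (k.psubst σ) (a.psubst σ.lift)
  | .app a b, σ => .app (a.psubst σ) (b.psubst σ)

def Kd.psubst : Kd → Subst → Kd
  | .intv a b, σ => .intv (a.psubst σ) (b.psubst σ)
  | .pi j k, σ => .pi (j.psubst σ) (k.psubst σ.lift)
end

theorem Ren.lift_comp (r s : Ren) : s.lift ∘ r.lift = Ren.lift (s ∘ r) := by
  funext i; cases i <;> rfl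

mutual
theorem Ty.ren_ren : ∀ (A : Ty) (r s : Ren), (A.ren r).ren s = A.ren (s ∘ r)
  | .var _, _, _ => rfl
  | .top, _, _ => rfl
  | .bot, _, _ => rfl
  | .arr a b, r, s => by simp only [Ty.ren, Ty.ren_ren a, Ty.ren_ren b]
  | .all k a, r, s => by simp only [Ty.ren, Kd.ren_ren k, Ty.ren_ren a, Ren.lift_comp]
  | .lam k a, r, s => by simp only [Ty.ren, Kd.ren_ren k, Ty.ren_ren a, Ren.lift_comp]
  | .app a b, r, s => by simp only [Ty.ren, Ty.ren_ren a, Ty.ren_ren b]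

theorem Kd.ren_ren : ∀ (K : Kd) (r s : Ren), (K.ren r).ren s = K.ren (s ∘ r)
  | .intv a b, r, s => by simp only [Kd.ren, Ty.ren_ren a, Ty.ren_ren b]
  | .pi j k, r, s => by simp only [Kd.ren, Kd.ren_ren j, Kd.ren_ren k, Ren.lift_comp]
end

theorem Subst.lift_comp_ren (r : Ren) (σ : Subst) : σ.lift ∘ r.lift = Subst.lift (σ ∘ r) := by
  funext i; cases i <;> rfl

mutual
theorem Ty.ren_psubst : ∀ (A : Ty) (r : Ren) (σ : Subst), (A.ren r).psubst σ = A.psubst (σ ∘ r)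
  | .var _, _, _ => rfl
  | .top, _, _ => rfl
  | .bot, _, _ => rfl
  | .arr a b, r, σ => by simp only [Ty.ren, Ty.psubst, Ty.ren_psubst a, Ty.ren_psubst b]
  | .all k a, r, σ => by
      simp only [Ty.ren, Ty.psubst, Kd.ren_psubst k, Ty.ren_psubst a, Subst.lift_comp_ren]
  | .lam k a, r, σ => by
      simp only [Ty.ren, Ty.psubst, Kd.ren_psubst k, Ty.ren_psubst a, Subst.lift_comp_ren]
  | .app a b, r, σ => by simp only [Ty.ren, Ty.psubst, Ty.ren_psubst a, Ty.ren_psubst b]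

theorem Kd.ren_psubst : ∀ (K : Kd) (r : Ren) (σ : Subst), (K.ren r).psubst σ = K.psubst (σ ∘ r)
  | .intv a b, r, σ => by simp only [Kd.ren, Kd.psubst, Ty.ren_psubst a, Ty.ren_psubst b]
  | .pi j k, r, σ => by
      simp only [Kd.ren, Kd.psubst, Kd.ren_psubst j, Kd.ren_psubst k, Subst.lift_comp_ren]
end

theorem Subst.lift_ren (σ : Subst) (r : Ren) :
    (fun i => (σ.lift i).ren r.lift) = Subst.lift (fun i => (σ i).ren r) := by
  funext i
  cases i with
  | zero => rfl
  | succ i =>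
      show ((σ i).ren Nat.succ).ren r.lift = ((σ i).ren r).ren Nat.succ
      rw [Ty.ren_ren, Ty.ren_ren]; rfl

mutual
theorem Ty.psubst_ren : ∀ (A : Ty) (σ : Subst) (r : Ren),
    (A.psubst σ).ren r = A.psubst (fun i => (σ i).ren r)
  | .var _, _, _ => rfl
  | .top, _, _ => rfl
  | .bot, _, _ => rfl
  | .arr a b, σ, r => by simp only [Ty.ren, Ty.psubst, Ty.psubst_ren a, Ty.psubst_ren b]
  | .all k a, σ, r => by
      simp only [Ty.ren, Ty.psubst, Kd.psubst_ren k, Ty.psubst_ren a, Subst.lift_ren]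
  | .lam k a, σ, r => by
      simp only [Ty.ren, Ty.psubst, Kd.psubst_ren k, Ty.psubst_ren a, Subst.lift_ren]
  | .app a b, σ, r => by simp only [Ty.ren, Ty.psubst, Ty.psubst_ren a, Ty.psubst_ren b]

theorem Kd.psubst_ren : ∀ (K : Kd) (σ : Subst) (r : Ren),
    (K.psubst σ).ren r = K.psubst (fun i => (σ i).ren r)
  | .intv a b, σ, r => by simp only [Kd.ren, Kd.psubst, Ty.psubst_ren a, Ty.psubst_ren b]
  | .pi j k, σ, r => by
      simp only [Kd.ren, Kd.psubst, Kd.psubst_ren j, Kd.psubst_ren k, Subst.lift_ren]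
end

theorem Subst.lift_psubst (σ τ : Subst) :
    (fun i => (σ.lift i).psubst τ.lift) = Subst.lift (fun i => (σ i).psubst τ) := by
  funext i
  cases i with
  | zero => rfl
  | succ i =>
      show ((σ i).ren Nat.succ).psubst τ.lift = ((σ i).psubst τ).ren Nat.succ
      rw [Ty.ren_psubst, Ty.psubst_ren]; rfl

mutual
theorem Ty.psubst_psubst : ∀ (A : Ty) (σ τ : Subst),
    (A.psubst σ).psubst τ = A.psubst (fun i => (σ i).psubst τ)
  | .var _, _, _ => rfl
  | .top, _, _ => rfl
  | .bot, _, _ => rfl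
  | .arr a b, σ, τ => by simp only [Ty.psubst, Ty.psubst_psubst a, Ty.psubst_psubst b]
  | .all k a, σ, τ => by
      simp only [Ty.psubst, Kd.psubst_psubst k, Ty.psubst_psubst a, Subst.lift_psubst]
  | .lam k a, σ, τ => by
      simp only [Ty.psubst, Kd.psubst_psubst k, Ty.psubst_psubst a, Subst.lift_psubst]
  | .app a b, σ, τ => by simp only [Ty.psubst, Ty.psubst_psubst a, Ty.psubst_psubst b]

theorem Kd.psubst_psubst : ∀ (K : Kd) (σ τ : Subst),
    (K.psubst σ).psubst τ = K.psubst (fun i => (σ i).psubst τ)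
  | .intv a b, σ, τ => by simp only [Kd.psubst, Ty.psubst_psubst a, Ty.psubst_psubst b]
  | .pi j k, σ, τ => by
      simp only [Kd.psubst, Kd.psubst_psubst j, Kd.psubst_psubst k, Subst.lift_psubst]
end

theorem Subst.lift_var : Subst.lift Ty.var = Ty.var := by
  funext i; cases i <;> rfl

mutual
theorem Ty.psubst_var : ∀ (A : Ty), A.psubst Ty.var = A
  | .var _ => rfl
  | .top => rfl
  | .bot => rfl
  | .arr a b => by simp only [Ty.psubst, Ty.psubst_var a, Ty.psubst_var b]
  | .all k a => by simp only [Ty.psubst, Subst.lift_var, Kd.psubst_var k, Ty.psubst_var a]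
  | .lam k a => by simp only [Ty.psubst, Subst.lift_var, Kd.psubst_var k, Ty.psubst_var a]
  | .app a b => by simp only [Ty.psubst, Ty.psubst_var a, Ty.psubst_var b]

theorem Kd.psubst_var : ∀ (K : Kd), K.psubst Ty.var = K
  | .intv a b => by simp only [Kd.psubst, Ty.psubst_var a, Ty.psubst_var b]
  | .pi j k => by simp only [Kd.psubst, Subst.lift_var, Kd.psubst_var j, Kd.psubst_var k]
end

theorem Ty.ren_eq_psubst (A : Ty) (r : Ren) : A.ren r = A.psubst (Ty.var ∘ r) := by
  rw [← Ty.psubst_var (A.ren r), Ty.ren_psubst]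

theorem Kd.ren_eq_psubst (K : Kd) (r : Ren) : K.ren r = K.psubst (Ty.var ∘ r) := by
  rw [← Kd.psubst_var (K.ren r), Kd.ren_psubst]

theorem Ren.lift_shift (c : ℕ) : (Ren.shift c).lift = Ren.shift (c + 1) := by
  funext i
  cases i with
  | zero => simp [Ren.lift, Ren.shift]
  | succ i => simp only [Ren.lift, Ren.shift]; split <;> split <;> omega

mutual
theorem Ty.shift_eq_ren : ∀ (A : Ty) (c : ℕ), A.shift c = A.ren (Ren.shift c)
  | .var _, c => by simp only [Ty.shift, Ty.ren, Ren.shift]; split <;> rfl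
  | .top, _ => rfl
  | .bot, _ => rfl
  | .arr a b, c => by simp only [Ty.shift, Ty.ren, Ty.shift_eq_ren a, Ty.shift_eq_ren b]
  | .all k a, c => by
      simp only [Ty.shift, Ty.ren, Kd.shift_eq_ren k, Ty.shift_eq_ren a, Ren.lift_shift]
  | .lam k a, c => by
      simp only [Ty.shift, Ty.ren, Kd.shift_eq_ren k, Ty.shift_eq_ren a, Ren.lift_shift]
  | .app a b, c => by simp only [Ty.shift, Ty.ren, Ty.shift_eq_ren a, Ty.shift_eq_ren b]

theorem Kd.shift_eq_ren : ∀ (K : Kd) (c : ℕ), K.shift c = K.ren (Ren.shift c)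
  | .intv a b, c => by simp only [Kd.shift, Kd.ren, Ty.shift_eq_ren a, Ty.shift_eq_ren b]
  | .pi j k, c => by
      simp only [Kd.shift, Kd.ren, Kd.shift_eq_ren j, Kd.shift_eq_ren k, Ren.lift_shift]
end

theorem Ty.shift_zero_eq_ren (A : Ty) : A.shift 0 = A.ren Nat.succ := A.shift_eq_ren 0

theorem Kd.shift_zero_eq_ren (K : Kd) : K.shift 0 = K.ren Nat.succ := K.shift_eq_ren 0

theorem Subst.lift_single (x : ℕ) (v : Ty) :
    (Subst.single x v).lift = Subst.single (x + 1) (v.ren Nat.succ) := by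
  funext i
  cases i with
  | zero => simp [Subst.lift, Subst.single]
  | succ i =>
      simp only [Subst.lift, Subst.single, Nat.add_right_cancel_iff, Nat.add_lt_add_iff_right]
      split_ifs <;> first | rfl | (simp only [Ty.ren, Ty.var.injEq]; omega)

mutual
theorem Ty.subst_eq_psubst : ∀ (A : Ty) (x : ℕ) (v : Ty), A.subst x v = A.psubst (Subst.single x v)
  | .var _, _, _ => by simp only [Ty.subst, Ty.psubst, Subst.single]
  | .top, _, _ => rfl
  | .bot, _, _ => rfl
  | .arr a b, x, v => by simp only [Ty.subst, Ty.psubst, Ty.subst_eq_psubst a, Ty.subst_eq_psubst b]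
  | .all k a, x, v => by
      simp only [Ty.subst, Ty.psubst, Kd.subst_eq_psubst k, Ty.subst_eq_psubst a,
        Subst.lift_single, Ty.shift_zero_eq_ren]
  | .lam k a, x, v => by
      simp only [Ty.subst, Ty.psubst, Kd.subst_eq_psubst k, Ty.subst_eq_psubst a,
        Subst.lift_single, Ty.shift_zero_eq_ren]
  | .app a b, x, v => by simp only [Ty.subst, Ty.psubst, Ty.subst_eq_psubst a, Ty.subst_eq_psubst b]

theorem Kd.subst_eq_psubst : ∀ (K : Kd) (x : ℕ) (v : Ty), K.subst x v = K.psubst (Subst.single x v)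
  | .intv a b, x, v => by
      simp only [Kd.subst, Kd.psubst, Ty.subst_eq_psubst a, Ty.subst_eq_psubst b]
  | .pi j k, x, v => by
      simp only [Kd.subst, Kd.psubst, Kd.subst_eq_psubst j, Kd.subst_eq_psubst k,
        Subst.lift_single, Ty.shift_zero_eq_ren]
end

theorem Subst.single_zero (v : Ty) : Subst.single 0 v = Subst.cons v Ty.var := by
  funext i; cases i <;> simp [Subst.single, Subst.cons]

theorem Ty.subst_zero_eq_psubst (A B : Ty) : A.subst 0 B = A.psubst (Subst.cons B Ty.var) := by
  rw [Ty.subst_eq_psubst, Subst.single_zero]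

theorem Kd.subst_zero_eq_psubst (K : Kd) (B : Ty) :
    K.subst 0 B = K.psubst (Subst.cons B Ty.var) := by
  rw [Kd.subst_eq_psubst, Subst.single_zero]

theorem Kd.weaken_eq_ren (K : Kd) (n : ℕ) : K.weaken n = K.ren (· + n) := by
  induction n with
  | zero => exact ((Kd.ren_eq_psubst K _).trans (Kd.psubst_var K)).symm
  | succ n ih =>
      rw [Kd.weaken, Function.iterate_succ_apply', ← Kd.weaken, ih, Kd.shift_zero_eq_ren,
        Kd.ren_ren]
      rfl

theorem Ty.weaken_succ (A : Ty) (n : ℕ) : A.weaken (n + 1) = (A.weaken n).shift 0 :=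
  Function.iterate_succ_apply' _ _ _

theorem Kd.weaken_succ (K : Kd) (n : ℕ) : K.weaken (n + 1) = (K.weaken n).shift 0 :=
  Function.iterate_succ_apply' _ _ _

theorem Kd.weaken_one (K : Kd) : K.weaken 1 = K.shift 0 := K.weaken_succ 0

theorem Ty.weaken_one (A : Ty) : A.weaken 1 = A.shift 0 := A.weaken_succ 0

theorem Kd.psubst_weaken (K : Kd) (m : ℕ) (σ : Subst) :
    (K.weaken m).psubst σ = K.psubst (fun i => σ (i + m)) := by
  rw [Kd.weaken_eq_ren, Kd.ren_psubst]; rfl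

theorem Ty.shift_zero_ren_lift (A : Ty) (r : Ren) : (A.shift 0).ren r.lift = (A.ren r).shift 0 := by
  simp only [Ty.shift_zero_eq_ren, Ty.ren_ren]; rfl

theorem Ty.shift_zero_psubst_lift (A : Ty) (σ : Subst) :
    (A.shift 0).psubst σ.lift = (A.psubst σ).shift 0 := by
  simp only [Ty.shift_zero_eq_ren, Ty.ren_psubst, Ty.psubst_ren]; rfl

theorem Ty.subst_zero_psubst (A B : Ty) (σ : Subst) :
    (A.subst 0 B).psubst σ = A.psubst (Subst.cons (B.psubst σ) σ) := by
  rw [Ty.subst_zero_eq_psubst, Ty.psubst_psubst]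
  congr 1; funext i; cases i <;> rfl

theorem Kd.subst_zero_psubst (K : Kd) (B : Ty) (σ : Subst) :
    (K.subst 0 B).psubst σ = K.psubst (Subst.cons (B.psubst σ) σ) := by
  rw [Kd.subst_zero_eq_psubst, Kd.psubst_psubst]
  congr 1; funext i; cases i <;> rfl

theorem Subst.lift_psubst_cons (σ : Subst) (b : Ty) :
    (fun i => (σ.lift i).psubst (Subst.cons b Ty.var)) = Subst.cons b σ := by
  funext i
  cases i with
  | zero => rfl
  | succ i => exact (Ty.ren_psubst _ _ _).trans (Ty.psubst_var _)

theorem Ty.psubst_lift_subst_zero (A : Ty) (σ : Subst) (b : Ty) :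
    (A.psubst σ.lift).subst 0 b = A.psubst (Subst.cons b σ) := by
  rw [Ty.subst_zero_eq_psubst, Ty.psubst_psubst, Subst.lift_psubst_cons]

theorem Kd.psubst_lift_subst_zero (K : Kd) (σ : Subst) (b : Ty) :
    (K.psubst σ.lift).subst 0 b = K.psubst (Subst.cons b σ) := by
  rw [Kd.subst_zero_eq_psubst, Kd.psubst_psubst, Subst.lift_psubst_cons]

theorem Ty.subst_zero_ren (A B : Ty) (r : Ren) :
    (A.subst 0 B).ren r = (A.ren r.lift).subst 0 (B.ren r) := by
  rw [Ty.subst_zero_eq_psubst, Ty.subst_zero_eq_psubst, Ty.psubst_ren, Ty.ren_psubst]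
  congr 1; funext i; cases i <;> rfl

theorem Kd.subst_zero_ren (K : Kd) (B : Ty) (r : Ren) :
    (K.subst 0 B).ren r = (K.ren r.lift).subst 0 (B.ren r) := by
  rw [Kd.subst_zero_eq_psubst, Kd.subst_zero_eq_psubst, Kd.psubst_ren, Kd.ren_psubst]
  congr 1; funext i; cases i <;> rfl

theorem Kd.shift_one_subst_zero_var (K : Kd) : (K.shift 1).subst 0 (.var 0) = K := by
  rw [Kd.shift_eq_ren, Kd.subst_zero_eq_psubst, Kd.ren_psubst]
  conv_rhs => rw [← Kd.psubst_var K]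
  congr 1; funext i; cases i <;> rfl

theorem CtxWf.tail {b : OBind} {Γ : Ctx} (h : CtxWf (b :: Γ)) : CtxWf Γ := by
  cases h <;> assumption

mutual
theorem KdWf.ctxWf {Γ K} : KdWf Γ K → CtxWf Γ
  | .intv h _ => h.ctxWf
  | .pi h _ => h.ctxWf

theorem Kinding.ctxWf {Γ A K} : Kinding Γ A K → CtxWf Γ
  | .var h _ => h
  | .top h => h
  | .bot h => h
  | .arr h _ => h.ctxWf
  | .abs h _ => h.ctxWf
  | .sing h => h.ctxWf
  | .all h _ => h.ctxWf
  | .app h _ => h.ctxWf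
  | .sub h _ => h.ctxWf

theorem SubKd.ctxWf {Γ J K} : SubKd Γ J K → CtxWf Γ
  | .intv h _ => h.ctxWf
  | .pi h _ _ => h.ctxWf

theorem SubTy.ctxWf {Γ A B K} : SubTy Γ A B K → CtxWf Γ
  | .refl h => h.ctxWf
  | .trans h _ => h.ctxWf
  | .top h => h.ctxWf
  | .bot h => h.ctxWf
  | .beta₁ _ h => h.ctxWf
  | .beta₂ _ h => h.ctxWf
  | .eta₁ h => h.ctxWf
  | .eta₂ h => h.ctxWf
  | .arr h _ => h.ctxWf
  | .abs h _ _ => h.ctxWf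
  | .all h _ _ => h.ctxWf
  | .app h _ => h.ctxWf
  | .bnd₁ h => h.ctxWf
  | .bnd₂ h => h.ctxWf
  | .intv h => h.ctxWf
  | .sub h _ => h.ctxWf
end

theorem SubKd.refl {Γ K} : KdWf Γ K → SubKd Γ K K
  | .intv h₁ h₂ => .intv (.refl h₁) (.refl h₂)
  | .pi h₁ h₂ => .pi (.pi h₁ h₂) (SubKd.refl h₁) (SubKd.refl h₂)

theorem KdWf.star {Γ : Ctx} (h : CtxWf Γ) : KdWf Γ Kd.star := .intv (.bot h) (.top h)

theorem Kinding.toStar {Γ A B C} (h : Kinding Γ A (.intv B C)) (hw : KdWf Γ (.intv B C)) :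
    Kinding Γ A Kd.star := by
  cases hw with
  | intv hB hC => exact .sub h (.intv (.bot hB) (.top hC))

theorem SubTy.toStar {Γ A₁ A₂ B C B₁ C₁ B₂ C₂} (h : SubTy Γ A₁ A₂ (.intv B C))
    (h₁ : Kinding Γ A₁ (.intv B₁ C₁)) (h₂ : Kinding Γ A₂ (.intv B₂ C₂)) :
    SubTy Γ A₁ A₂ Kd.star :=
  .sub (.intv h) (.intv (.bot h₁) (.top h₂))

def OBind.shift (c : ℕ) : OBind → OBind
  | .ty K => .ty (K.shift c)
  | .tm A => .tm (A.shift c)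

/-- `Δ.shiftPrefix ++ b :: Γ` is `Δ ++ Γ` with `b` inserted below `Δ`; each binding of `Δ`
is shifted past the new variable. -/
def Ctx.shiftPrefix : Ctx → Ctx
  | [] => []
  | b :: Δ => b.shift Δ.length :: Ctx.shiftPrefix Δ

@[simp] theorem Ctx.length_shiftPrefix (Δ : Ctx) : Δ.shiftPrefix.length = Δ.length := by
  induction Δ with
  | nil => rfl
  | cons b Δ ih => simp [Ctx.shiftPrefix, ih]

theorem Ctx.getElem?_shiftPrefix {Δ : Ctx} {x : ℕ} (h : x < Δ.length) :
    Δ.shiftPrefix[x]? = Δ[x]?.map (OBind.shift (Δ.length - (x + 1))) := by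
  induction Δ generalizing x with
  | nil => simp at h
  | cons b Δ ih =>
      cases x with
      | zero => simp [Ctx.shiftPrefix]
      | succ x =>
          simp only [Ctx.shiftPrefix, List.getElem?_cons_succ, List.length_cons]
          rw [ih (by simpa using h), show Δ.length + 1 - (x + 1 + 1) = Δ.length - (x + 1) by omega]

theorem Kd.weaken_shift_of_le {K : Kd} {m c : ℕ} (h : m ≤ c) :
    (K.weaken m).shift c = (K.shift (c - m)).weaken m := by
  simp only [Kd.weaken_eq_ren, Kd.shift_eq_ren, Kd.ren_ren]
  congr 1; funext i; simp only [Function.comp, Ren.shift]; split_ifs <;> omega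

theorem Kd.weaken_shift_of_ge {K : Kd} {m c : ℕ} (h : c ≤ m) :
    (K.weaken m).shift c = K.weaken (m + 1) := by
  simp only [Kd.weaken_eq_ren, Kd.shift_eq_ren, Kd.ren_ren]
  congr 1; funext i; simp only [Function.comp, Ren.shift]; split_ifs <;> omega

theorem Kd.subst_zero_shift (K : Kd) (B : Ty) (n : ℕ) :
    (K.subst 0 B).shift n = (K.shift (n + 1)).subst 0 (B.shift n) := by
  simp only [Kd.shift_eq_ren, Ty.shift_eq_ren, Kd.subst_zero_ren, Ren.lift_shift]

theorem Ty.subst_zero_shift (A B : Ty) (n : ℕ) :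
    (A.subst 0 B).shift n = (A.shift (n + 1)).subst 0 (B.shift n) := by
  simp only [Ty.shift_eq_ren, Ty.subst_zero_ren, Ren.lift_shift]

theorem Ty.shift_zero_shift (A : Ty) (n : ℕ) : (A.shift 0).shift (n + 1) = (A.shift n).shift 0 := by
  rw [Ty.shift_eq_ren _ (n + 1), ← Ren.lift_shift, Ty.shift_zero_ren_lift, ← Ty.shift_eq_ren]

theorem Kinding.var_shift {Δ Γ : Ctx} {b : OBind} {x : ℕ} {K : Kd}
    (hw : CtxWf (Δ.shiftPrefix ++ b :: Γ)) (hx : (Δ ++ Γ)[x]? = some (.ty K)) :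
    Kinding (Δ.shiftPrefix ++ b :: Γ) ((Ty.var x).shift Δ.length)
      ((K.weaken (x + 1)).shift Δ.length) := by
  by_cases hlt : x < Δ.length
  · rw [List.getElem?_append_left hlt] at hx
    have hx' : (Δ.shiftPrefix ++ b :: Γ)[x]? = some (.ty (K.shift (Δ.length - (x + 1)))) := by
      rw [List.getElem?_append_left (by simpa using hlt), Ctx.getElem?_shiftPrefix hlt, hx]
      rfl
    rw [Kd.weaken_shift_of_le hlt]
    simpa [Ty.shift, hlt] using Kinding.var hw hx'
  · rw [List.getElem?_append_right (by omega)] at hx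
    have hx' : (Δ.shiftPrefix ++ b :: Γ)[x + 1]? = some (.ty K) := by
      rw [List.getElem?_append_right (by simp; omega), Ctx.length_shiftPrefix,
        show x + 1 - Δ.length = x - Δ.length + 1 by omega]
      simpa using hx
    rw [Kd.weaken_shift_of_ge (by omega)]
    simpa [Ty.shift, hlt] using Kinding.var hw hx'

mutual
theorem CtxWf.shift {E Δ Γ : Ctx} {b : OBind} :
    CtxWf E → E = Δ ++ Γ → CtxWf (b :: Γ) → CtxWf (Δ.shiftPrefix ++ b :: Γ)
  | .nil, hE, hb => by
      obtain ⟨rfl, rfl⟩ := List.append_eq_nil_iff.mp hE.symm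
      exact hb
  | .ty hw hK, hE, hb => by
      cases Δ with
      | nil => subst hE; exact hb
      | cons _ Δ =>
          simp only [List.cons_append, List.cons.injEq] at hE
          obtain ⟨rfl, hE⟩ := hE
          exact .ty (hw.shift hE hb) (hK.shift hE hb)
  | .tm hw hA, hE, hb => by
      cases Δ with
      | nil => subst hE; exact hb
      | cons _ Δ =>
          simp only [List.cons_append, List.cons.injEq] at hE
          obtain ⟨rfl, hE⟩ := hE
          exact .tm (hw.shift hE hb) (hA.shift hE hb)

theorem KdWf.shift {E Δ Γ : Ctx} {b : OBind} {K : Kd} :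
    KdWf E K → E = Δ ++ Γ → CtxWf (b :: Γ) → KdWf (Δ.shiftPrefix ++ b :: Γ) (K.shift Δ.length)
  | .intv h₁ h₂, hE, hb => .intv (h₁.shift hE hb) (h₂.shift hE hb)
  | .pi (J := J) h₁ h₂, hE, hb =>
      .pi (h₁.shift hE hb) (h₂.shift (Δ := .ty J :: Δ) (by rw [hE]; rfl) hb)

theorem Kinding.shift {E Δ Γ : Ctx} {b : OBind} {A : Ty} {K : Kd} :
    Kinding E A K → E = Δ ++ Γ → CtxWf (b :: Γ) →
      Kinding (Δ.shiftPrefix ++ b :: Γ) (A.shift Δ.length) (K.shift Δ.length)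
  | .var hw hx, hE, hb => .var_shift (hw.shift hE hb) (hE ▸ hx)
  | .top hw, hE, hb => .top (hw.shift hE hb)
  | .bot hw, hE, hb => .bot (hw.shift hE hb)
  | .arr h₁ h₂, hE, hb => .arr (h₁.shift hE hb) (h₂.shift hE hb)
  | .abs (J := J) h₁ h₂, hE, hb =>
      .abs (h₁.shift hE hb) (h₂.shift (Δ := .ty J :: Δ) (by rw [hE]; rfl) hb)
  | .sing h, hE, hb => .sing (h.shift hE hb)
  | .all (K := J) h₁ h₂, hE, hb =>
      .all (h₁.shift hE hb) (h₂.shift (Δ := .ty J :: Δ) (by rw [hE]; rfl) hb)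
  | .app h₁ h₂, hE, hb => by
      rw [Kd.subst_zero_shift]; exact .app (h₁.shift hE hb) (h₂.shift hE hb)
  | .sub h₁ h₂, hE, hb => .sub (h₁.shift hE hb) (h₂.shift hE hb)

theorem SubKd.shift {E Δ Γ : Ctx} {b : OBind} {J K : Kd} :
    SubKd E J K → E = Δ ++ Γ → CtxWf (b :: Γ) →
      SubKd (Δ.shiftPrefix ++ b :: Γ) (J.shift Δ.length) (K.shift Δ.length)
  | .intv h₁ h₂, hE, hb => .intv (h₁.shift hE hb) (h₂.shift hE hb)
  | .pi (J₂ := J₂) h₀ h₁ h₂, hE, hb =>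
      .pi (h₀.shift hE hb) (h₁.shift hE hb) (h₂.shift (Δ := .ty J₂ :: Δ) (by rw [hE]; rfl) hb)

theorem SubTy.shift {E Δ Γ : Ctx} {b : OBind} {A B : Ty} {K : Kd} :
    SubTy E A B K → E = Δ ++ Γ → CtxWf (b :: Γ) →
      SubTy (Δ.shiftPrefix ++ b :: Γ) (A.shift Δ.length) (B.shift Δ.length) (K.shift Δ.length)
  | .refl h, hE, hb => .refl (h.shift hE hb)
  | .trans h₁ h₂, hE, hb => .trans (h₁.shift hE hb) (h₂.shift hE hb)
  | .top h, hE, hb => .top (h.shift hE hb)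
  | .bot h, hE, hb => .bot (h.shift hE hb)
  | .beta₁ (J := J) h₁ h₂, hE, hb => by
      rw [Kd.subst_zero_shift, Ty.subst_zero_shift]
      exact .beta₁ (h₁.shift (Δ := .ty J :: Δ) (by rw [hE]; rfl) hb) (h₂.shift hE hb)
  | .beta₂ (J := J) h₁ h₂, hE, hb => by
      rw [Kd.subst_zero_shift, Ty.subst_zero_shift]
      exact .beta₂ (h₁.shift (Δ := .ty J :: Δ) (by rw [hE]; rfl) hb) (h₂.shift hE hb)
  | .eta₁ h, hE, hb => by
      have := SubTy.eta₁ (h.shift hE hb)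
      rwa [← Ty.shift_zero_shift] at this
  | .eta₂ h, hE, hb => by
      have := SubTy.eta₂ (h.shift hE hb)
      rwa [← Ty.shift_zero_shift] at this
  | .arr h₁ h₂, hE, hb => .arr (h₁.shift hE hb) (h₂.shift hE hb)
  | .abs (J := J) h₁ h₂ h₃, hE, hb =>
      .abs (h₁.shift hE hb) (h₂.shift hE hb) (h₃.shift (Δ := .ty J :: Δ) (by rw [hE]; rfl) hb)
  | .all (K₂ := J) h₁ h₂ h₃, hE, hb =>
      .all (h₁.shift hE hb) (h₂.shift hE hb) (h₃.shift (Δ := .ty J :: Δ) (by rw [hE]; rfl) hb)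
  | .app h (.antisym h₁ h₂), hE, hb => by
      rw [Kd.subst_zero_shift]
      exact .app (h.shift hE hb) (.antisym (h₁.shift hE hb) (h₂.shift hE hb))
  | .bnd₁ h, hE, hb => .bnd₁ (h.shift hE hb)
  | .bnd₂ h, hE, hb => .bnd₂ (h.shift hE hb)
  | .intv h, hE, hb => .intv (h.shift hE hb)
  | .sub h₁ h₂, hE, hb => .sub (h₁.shift hE hb) (h₂.shift hE hb)
end

theorem KdWf.weaken {Γ K} (h : KdWf Γ K) {b : OBind} (hb : CtxWf (b :: Γ)) :
    KdWf (b :: Γ) (K.shift 0) :=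
  h.shift (Δ := []) rfl hb

theorem Kinding.weaken {Γ A K} (h : Kinding Γ A K) {b : OBind} (hb : CtxWf (b :: Γ)) :
    Kinding (b :: Γ) (A.shift 0) (K.shift 0) :=
  h.shift (Δ := []) rfl hb

theorem SubKd.weaken {Γ J K} (h : SubKd Γ J K) {b : OBind} (hb : CtxWf (b :: Γ)) :
    SubKd (b :: Γ) (J.shift 0) (K.shift 0) :=
  h.shift (Δ := []) rfl hb

theorem SubTy.weaken {Γ A B K} (h : SubTy Γ A B K) {b : OBind} (hb : CtxWf (b :: Γ)) :
    SubTy (b :: Γ) (A.shift 0) (B.shift 0) (K.shift 0) :=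
  h.shift (Δ := []) rfl hb

theorem CtxWf.kdWf_lookup {Γ : Ctx} {x : ℕ} {K : Kd} (hw : CtxWf Γ)
    (h : Γ[x]? = some (.ty K)) : KdWf Γ (K.weaken (x + 1)) := by
  induction x generalizing Γ with
  | zero =>
      cases hw with
      | nil => simp at h
      | ty hw hK => cases h; rw [Kd.weaken_one]; exact hK.weaken (.ty hw hK)
      | tm => simp at h
  | succ x ih =>
      cases Γ with
      | nil => simp at h
      | cons b Γ => rw [Kd.weaken_succ]; exact (ih hw.tail h).weaken hw

theorem CtxWf.kinding_lookup {Γ : Ctx} {x : ℕ} {A : Ty} (hw : CtxWf Γ)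
    (h : Γ[x]? = some (.tm A)) : Kinding Γ (A.weaken (x + 1)) Kd.star := by
  induction x generalizing Γ with
  | zero =>
      cases hw with
      | nil => simp at h
      | ty => simp at h
      | tm hw hA => cases h; rw [Ty.weaken_one]; exact hA.weaken (.tm hw hA)
  | succ x ih =>
      cases Γ with
      | nil => simp at h
      | cons b Γ => rw [Ty.weaken_succ]; exact (ih hw.tail h).weaken hw

structure KdWfEq (Γ : Ctx) (K₁ K₂ : Kd) : Prop where
  wf₁ : KdWf Γ K₁
  wf₂ : KdWf Γ K₂
  le : SubKd Γ K₁ K₂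
  ge : SubKd Γ K₂ K₁

/-- `A₁ : K₁` and `A₂ : K₂` are equal types, compared at `K₁`. In use, `Kᵢ` is the instance
of one kind under the substitution that produced `Aᵢ`. -/
structure TyWfEq (Γ : Ctx) (A₁ A₂ : Ty) (K₁ K₂ : Kd) : Prop where
  kinding₁ : Kinding Γ A₁ K₁
  kinding₂ : Kinding Γ A₂ K₂
  kinding₂₁ : Kinding Γ A₂ K₁
  le : SubTy Γ A₁ A₂ K₁
  ge : SubTy Γ A₂ A₁ K₁

theorem KdWfEq.refl {Γ K} (h : KdWf Γ K) : KdWfEq Γ K K := ⟨h, h, .refl h, .refl h⟩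

theorem TyWfEq.refl {Γ A K} (h : Kinding Γ A K) : TyWfEq Γ A A K K := ⟨h, h, h, .refl h, .refl h⟩

theorem KdWfEq.weaken {Γ K₁ K₂} (h : KdWfEq Γ K₁ K₂) {b : OBind} (hb : CtxWf (b :: Γ)) :
    KdWfEq (b :: Γ) (K₁.shift 0) (K₂.shift 0) :=
  ⟨h.wf₁.weaken hb, h.wf₂.weaken hb, h.le.weaken hb, h.ge.weaken hb⟩

theorem TyWfEq.weaken {Γ A₁ A₂ K₁ K₂} (h : TyWfEq Γ A₁ A₂ K₁ K₂) {b : OBind}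
    (hb : CtxWf (b :: Γ)) : TyWfEq (b :: Γ) (A₁.shift 0) (A₂.shift 0) (K₁.shift 0) (K₂.shift 0) :=
  ⟨h.kinding₁.weaken hb, h.kinding₂.weaken hb, h.kinding₂₁.weaken hb, h.le.weaken hb,
    h.ge.weaken hb⟩

/-- `Γ' ⊢ σ₁ = σ₂ : E`. -/
structure SubstEq (Γ' : Ctx) (σ₁ σ₂ : Subst) (E : Ctx) : Prop where
  ctxWf : CtxWf Γ'
  ty : ∀ (x : ℕ) (K : Kd), E[x]? = some (.ty K) → TyWfEq Γ' (σ₁ x) (σ₂ x)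
    ((K.weaken (x + 1)).psubst σ₁) ((K.weaken (x + 1)).psubst σ₂)
  kd : ∀ (x : ℕ) (K : Kd), E[x]? = some (.ty K) →
    KdWfEq Γ' ((K.weaken (x + 1)).psubst σ₁) ((K.weaken (x + 1)).psubst σ₂)

theorem Kd.psubst_weaken_succ (K : Kd) (x : ℕ) (σ : Subst) :
    (K.weaken (x + 1)).psubst σ = (K.weaken x).psubst (fun i => σ (i + 1)) := by
  rw [Kd.psubst_weaken, Kd.psubst_weaken]; rfl

theorem Kd.psubst_weaken_succ_cons (K : Kd) (x : ℕ) (b : Ty) (σ : Subst) :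
    (K.weaken (x + 1)).psubst (Subst.cons b σ) = (K.weaken x).psubst σ :=
  K.psubst_weaken_succ x _

theorem Kd.psubst_shift_zero (K : Kd) (σ : Subst) :
    K.psubst (fun i => (σ i).shift 0) = (K.psubst σ).shift 0 := by
  simp only [Ty.shift_zero_eq_ren, Kd.shift_zero_eq_ren, Kd.psubst_ren]

theorem Subst.lift_eq_cons (σ : Subst) : σ.lift = Subst.cons (.var 0) (fun i => (σ i).shift 0) := by
  funext i; cases i <;> simp [Subst.lift, Subst.cons, Ty.shift_zero_eq_ren]

namespace SubstEq

variable {Γ' E : Ctx} {σ₁ σ₂ : Subst}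

theorem left (h : SubstEq Γ' σ₁ σ₂ E) : SubstEq Γ' σ₁ σ₁ E :=
  ⟨h.ctxWf, fun x K hx => .refl (h.ty x K hx).kinding₁, fun x K hx => .refl (h.kd x K hx).wf₁⟩

theorem right (h : SubstEq Γ' σ₁ σ₂ E) : SubstEq Γ' σ₂ σ₂ E :=
  ⟨h.ctxWf, fun x K hx => .refl (h.ty x K hx).kinding₂, fun x K hx => .refl (h.kd x K hx).wf₂⟩

theorem id (hw : CtxWf E) : SubstEq E Ty.var Ty.var E where
  ctxWf := hw
  ty x K hx := by rw [Kd.psubst_var]; exact .refl (.var hw hx)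
  kd x K hx := by rw [Kd.psubst_var]; exact .refl (hw.kdWf_lookup hx)

theorem tail {b : OBind} (h : SubstEq Γ' σ₁ σ₂ (b :: E)) :
    SubstEq Γ' (fun i => σ₁ (i + 1)) (fun i => σ₂ (i + 1)) E where
  ctxWf := h.ctxWf
  ty x K hx := by
    simpa only [Kd.psubst_weaken_succ] using h.ty (x + 1) K hx
  kd x K hx := by
    simpa only [Kd.psubst_weaken_succ] using h.kd (x + 1) K hx

theorem cons {J : Kd} {b₁ b₂ : Ty} (h : SubstEq Γ' σ₁ σ₂ E)
    (hb : TyWfEq Γ' b₁ b₂ (J.psubst σ₁) (J.psubst σ₂))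
    (hJ : KdWfEq Γ' (J.psubst σ₁) (J.psubst σ₂)) :
    SubstEq Γ' (Subst.cons b₁ σ₁) (Subst.cons b₂ σ₂) (.ty J :: E) where
  ctxWf := h.ctxWf
  ty x K hx := by
    rw [Kd.psubst_weaken_succ_cons, Kd.psubst_weaken_succ_cons]
    cases x with
    | zero => cases hx; exact hb
    | succ x => exact h.ty x K hx
  kd x K hx := by
    rw [Kd.psubst_weaken_succ_cons, Kd.psubst_weaken_succ_cons]
    cases x with
    | zero => cases hx; exact hJ
    | succ x => exact h.kd x K hx

theorem weaken (h : SubstEq Γ' σ₁ σ₂ E) {b : OBind} (hb : CtxWf (b :: Γ')) :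
    SubstEq (b :: Γ') (fun i => (σ₁ i).shift 0) (fun i => (σ₂ i).shift 0) E where
  ctxWf := hb
  ty x K hx := by simpa only [Kd.psubst_shift_zero] using (h.ty x K hx).weaken hb
  kd x K hx := by simpa only [Kd.psubst_shift_zero] using (h.kd x K hx).weaken hb

theorem lift {J L : Kd} (h : SubstEq Γ' σ₁ σ₂ E) (hJ : KdWfEq Γ' (J.psubst σ₁) (J.psubst σ₂))
    (hL : KdWf Γ' L) (hL₁ : SubKd Γ' L (J.psubst σ₁)) (hL₂ : SubKd Γ' L (J.psubst σ₂)) :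
    SubstEq (.ty L :: Γ') σ₁.lift σ₂.lift (.ty J :: E) := by
  have hw : CtxWf (.ty L :: Γ') := .ty h.ctxWf hL
  have h0 : Kinding (.ty L :: Γ') (.var 0) (L.shift 0) := Kinding.var (x := 0) hw rfl
  rw [Subst.lift_eq_cons, Subst.lift_eq_cons]
  refine (h.weaken hw).cons ?_ (by simpa only [Kd.psubst_shift_zero] using hJ.weaken hw)
  simp only [Kd.psubst_shift_zero]
  have h₁ : Kinding (.ty L :: Γ') (.var 0) ((J.psubst σ₁).shift 0) := .sub h0 (hL₁.weaken hw)
  exact ⟨h₁, .sub h0 (hL₂.weaken hw), h₁, .refl h₁, .refl h₁⟩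

theorem liftLeft {J : Kd} (h : SubstEq Γ' σ₁ σ₂ E)
    (hJ : KdWfEq Γ' (J.psubst σ₁) (J.psubst σ₂)) :
    SubstEq (.ty (J.psubst σ₁) :: Γ') σ₁.lift σ₂.lift (.ty J :: E) :=
  h.lift hJ hJ.wf₁ (.refl hJ.wf₁) hJ.le

theorem liftRight {J : Kd} (h : SubstEq Γ' σ₁ σ₂ E)
    (hJ : KdWfEq Γ' (J.psubst σ₁) (J.psubst σ₂)) :
    SubstEq (.ty (J.psubst σ₂) :: Γ') σ₁.lift σ₂.lift (.ty J :: E) :=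
  h.lift hJ hJ.wf₂ hJ.ge (.refl hJ.wf₂)

end SubstEq

theorem KdWf.intv_inv {Γ A B} (h : KdWf Γ (.intv A B)) :
    Kinding Γ A Kd.star ∧ Kinding Γ B Kd.star := by
  cases h with
  | intv h₁ h₂ => exact ⟨h₁, h₂⟩

theorem SubKd.intv_inv {Γ A₁ B₁ A₂ B₂} (h : SubKd Γ (.intv A₁ B₁) (.intv A₂ B₂)) :
    SubTy Γ A₂ A₁ Kd.star ∧ SubTy Γ B₁ B₂ Kd.star := by
  cases h with
  | intv h₁ h₂ => exact ⟨h₁, h₂⟩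

def KdStable (E : Ctx) (K : Kd) : Prop :=
  ∀ Γ' σ₁ σ₂, SubstEq Γ' σ₁ σ₂ E → KdWfEq Γ' (K.psubst σ₁) (K.psubst σ₂)

def KdFunctional : Ctx → Kd → Prop
  | E, .intv A B => KdStable E (.intv A B)
  | E, .pi J K => KdStable E (.pi J K) ∧ KdFunctional E J ∧ KdFunctional (.ty J :: E) K

def TyFunctional (E : Ctx) (A : Ty) (K : Kd) : Prop :=
  ∀ Γ' σ₁ σ₂, SubstEq Γ' σ₁ σ₂ E →
    TyWfEq Γ' (A.psubst σ₁) (A.psubst σ₂) (K.psubst σ₁) (K.psubst σ₂)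

def SubstFunctional (σ : Subst) (E E' : Ctx) : Prop :=
  ∀ Γ' τ₁ τ₂, SubstEq Γ' τ₁ τ₂ E' →
    SubstEq Γ' (fun i => (σ i).psubst τ₁) (fun i => (σ i).psubst τ₂) E

theorem KdFunctional.stable : ∀ {E : Ctx} {K : Kd}, KdFunctional E K → KdStable E K
  | _, .intv _ _, h => h
  | _, .pi _ _, h => h.1

theorem KdFunctional.kdWf {E : Ctx} {K : Kd} (h : KdFunctional E K) (hw : CtxWf E) : KdWf E K := by
  simpa only [Kd.psubst_var] using (h.stable _ _ _ (SubstEq.id hw)).wf₁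

theorem TyFunctional.kinding {E : Ctx} {A : Ty} {K : Kd} (h : TyFunctional E A K) (hw : CtxWf E) :
    Kinding E A K := by
  simpa only [Ty.psubst_var, Kd.psubst_var] using (h _ _ _ (SubstEq.id hw)).kinding₁

namespace SubstFunctional

theorem lift {σ : Subst} {E E' : Ctx} {J : Kd} (hσ : SubstFunctional σ E E') :
    SubstFunctional σ.lift (.ty J :: E) (.ty (J.psubst σ) :: E') := by
  intro Γ' τ₁ τ₂ h
  have hcons : ∀ τ : Subst, (fun i => (σ.lift i).psubst τ) =
      Subst.cons (τ 0) (fun i => (σ i).psubst (fun j => τ (j + 1))) := by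
    intro τ; funext i; cases i with
    | zero => rfl
    | succ i => exact Ty.ren_psubst _ _ _
  have hJ : ∀ τ : Subst, ((J.psubst σ).weaken (0 + 1)).psubst τ =
      J.psubst (fun i => (σ i).psubst (fun j => τ (j + 1))) := by
    intro τ; rw [Kd.psubst_weaken_succ]; exact Kd.psubst_psubst _ _ _
  have hty := h.ty 0 _ rfl
  have hkd := h.kd 0 _ rfl
  rw [hJ, hJ] at hty hkd
  rw [hcons, hcons]
  exact (hσ _ _ _ h.tail).cons hty hkd

theorem succ {E : Ctx} {b : OBind} : SubstFunctional (fun i => .var (i + 1)) E (b :: E) :=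
  fun _ _ _ h => h.tail

theorem single {E : Ctx} {B : Ty} {J : Kd} (hB : TyFunctional E B J) (hJ : KdFunctional E J) :
    SubstFunctional (Subst.cons B Ty.var) (.ty J :: E) E := by
  intro Γ' τ₁ τ₂ h
  have hcons : ∀ τ : Subst,
      (fun i => (Subst.cons B Ty.var i).psubst τ) = Subst.cons (B.psubst τ) τ := by
    intro τ; funext i; cases i <;> rfl
  rw [hcons, hcons]
  exact h.cons (hB _ _ _ h) (hJ.stable _ _ _ h)

end SubstFunctional

theorem KdStable.psubst {E E' : Ctx} {K : Kd} {σ : Subst} (h : KdStable E K)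
    (hσ : SubstFunctional σ E E') : KdStable E' (K.psubst σ) := by
  intro Γ' τ₁ τ₂ hτ
  rw [Kd.psubst_psubst, Kd.psubst_psubst]
  exact h _ _ _ (hσ _ _ _ hτ)

theorem KdFunctional.psubst : ∀ {K : Kd} {E E' : Ctx} {σ : Subst}, KdFunctional E K →
    SubstFunctional σ E E' → KdFunctional E' (K.psubst σ)
  | .intv _ _, _, _, _, h, hσ => KdStable.psubst (K := .intv _ _) h hσ
  | .pi _ _, _, _, _, ⟨h, hJ, hK⟩, hσ =>
      ⟨KdStable.psubst (K := .pi _ _) h hσ, hJ.psubst hσ, hK.psubst hσ.lift⟩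

theorem TyFunctional.psubst {E E' : Ctx} {A : Ty} {K : Kd} {σ : Subst} (h : TyFunctional E A K)
    (hσ : SubstFunctional σ E E') : TyFunctional E' (A.psubst σ) (K.psubst σ) := by
  intro Γ' τ₁ τ₂ hτ
  rw [Ty.psubst_psubst, Ty.psubst_psubst, Kd.psubst_psubst, Kd.psubst_psubst]
  exact h _ _ _ (hσ _ _ _ hτ)

theorem KdFunctional.weaken {E : Ctx} {K : Kd} (h : KdFunctional E K) (b : OBind) :
    KdFunctional (b :: E) (K.shift 0) := by
  rw [Kd.shift_zero_eq_ren, Kd.ren_eq_psubst]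
  exact h.psubst SubstFunctional.succ

theorem TyFunctional.weaken {E : Ctx} {A : Ty} {K : Kd} (h : TyFunctional E A K) (b : OBind) :
    TyFunctional (b :: E) (A.shift 0) (K.shift 0) := by
  rw [Ty.shift_zero_eq_ren, Kd.shift_zero_eq_ren, Ty.ren_eq_psubst, Kd.ren_eq_psubst]
  exact h.psubst SubstFunctional.succ

theorem KdFunctional.subst_zero {E : Ctx} {J K : Kd} {B : Ty} (hK : KdFunctional (.ty J :: E) K)
    (hB : TyFunctional E B J) (hJ : KdFunctional E J) : KdFunctional E (K.subst 0 B) := by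
  rw [Kd.subst_zero_eq_psubst]
  exact hK.psubst (.single hB hJ)

theorem TyFunctional.subst_zero {E : Ctx} {J K : Kd} {A B : Ty}
    (hA : TyFunctional (.ty J :: E) A K) (hB : TyFunctional E B J) (hJ : KdFunctional E J) :
    TyFunctional E (A.subst 0 B) (K.subst 0 B) := by
  rw [Ty.subst_zero_eq_psubst, Kd.subst_zero_eq_psubst]
  exact hA.psubst (.single hB hJ)

namespace KdFunctional

variable {E : Ctx}

theorem star : KdFunctional E Kd.star :=
  fun _ _ _ h => .refl (.star h.ctxWf)

theorem intv {A B : Ty} (hA : TyFunctional E A Kd.star) (hB : TyFunctional E B Kd.star) :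
    KdFunctional E (.intv A B) := by
  intro Γ' σ₁ σ₂ h
  have a := hA _ _ _ h
  have b := hB _ _ _ h
  exact ⟨.intv a.kinding₁ b.kinding₁, .intv a.kinding₂ b.kinding₂, .intv a.ge b.le,
    .intv a.le b.ge⟩

theorem intv_inv {B C : Ty} (h : KdFunctional E (.intv B C)) :
    TyFunctional E B Kd.star ∧ TyFunctional E C Kd.star := by
  constructor <;> intro Γ' σ₁ σ₂ hσ <;> have e := h.stable _ _ _ hσ
  · exact ⟨e.wf₁.intv_inv.1, e.wf₂.intv_inv.1, e.wf₂.intv_inv.1, e.ge.intv_inv.1, e.le.intv_inv.1⟩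
  · exact ⟨e.wf₁.intv_inv.2, e.wf₂.intv_inv.2, e.wf₂.intv_inv.2, e.le.intv_inv.2, e.ge.intv_inv.2⟩

theorem pi {J K : Kd} (hJ : KdFunctional E J) (hK : KdFunctional (.ty J :: E) K) :
    KdFunctional E (.pi J K) := by
  refine ⟨fun Γ' σ₁ σ₂ h => ?_, hJ, hK⟩
  have eJ := hJ.stable _ _ _ h
  have w₁ : KdWf Γ' ((Kd.pi J K).psubst σ₁) :=
    .pi eJ.wf₁ (hK.stable _ _ _ (h.left.liftLeft (.refl eJ.wf₁))).wf₁
  have w₂ : KdWf Γ' ((Kd.pi J K).psubst σ₂) :=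
    .pi eJ.wf₂ (hK.stable _ _ _ (h.right.liftLeft (.refl eJ.wf₂))).wf₁
  exact ⟨w₁, w₂, .pi w₁ eJ.ge (hK.stable _ _ _ (h.liftRight eJ)).le,
    .pi w₂ eJ.le (hK.stable _ _ _ (h.liftLeft eJ)).ge⟩

theorem domain {J K : Kd} (h : KdFunctional E (.pi J K)) : KdFunctional E J := h.2.1

theorem codomain {J K : Kd} (h : KdFunctional E (.pi J K)) : KdFunctional (.ty J :: E) K := h.2.2

theorem psubst_cons_le {J K : Kd} (hK : KdFunctional (.ty J :: E) K) (hJ : KdFunctional E J)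
    {Γ' : Ctx} {σ : Subst} {B₁ B₂ : Ty} (h : SubstEq Γ' σ σ E)
    (hB : TyWfEq Γ' B₁ B₂ (J.psubst σ) (J.psubst σ)) :
    SubKd Γ' (K.psubst (Subst.cons B₁ σ)) (K.psubst (Subst.cons B₂ σ)) :=
  (hK.stable _ _ _ (h.cons hB (hJ.stable _ _ _ h))).le

end KdFunctional

theorem TyWfEq.symm {Γ A₁ A₂ K₁ K₂} (h : TyWfEq Γ A₁ A₂ K₁ K₂) : TyWfEq Γ A₂ A₁ K₁ K₁ :=
  ⟨h.kinding₂₁, h.kinding₁, h.kinding₁, h.ge, h.le⟩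

theorem Kinding.app_psubst {Γ : Ctx} {A B : Ty} {J K : Kd} {σ : Subst}
    (hA : Kinding Γ A (.pi J (K.psubst σ.lift))) (hB : Kinding Γ B J) :
    Kinding Γ (.app A B) (K.psubst (Subst.cons B σ)) := by
  simpa only [Kd.psubst_lift_subst_zero] using Kinding.app hA hB

theorem SubTy.app_psubst {Γ : Ctx} {A₁ A₂ B₁ B₂ : Ty} {J K : Kd} {σ : Subst}
    (hA : SubTy Γ A₁ A₂ (.pi J (K.psubst σ.lift))) (hB : TyEq Γ B₁ B₂ J) :
    SubTy Γ (.app A₁ B₁) (.app A₂ B₂) (K.psubst (Subst.cons B₁ σ)) := by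
  simpa only [Kd.psubst_lift_subst_zero] using SubTy.app hA hB

namespace TyFunctional

variable {E : Ctx}

theorem var {x : ℕ} {K : Kd} (hx : E[x]? = some (.ty K)) :
    TyFunctional E (.var x) (K.weaken (x + 1)) :=
  fun _ _ _ h => h.ty x K hx

theorem top : TyFunctional E .top Kd.star := fun _ _ _ h => .refl (.top h.ctxWf)

theorem bot : TyFunctional E .bot Kd.star := fun _ _ _ h => .refl (.bot h.ctxWf)

theorem sub {A : Ty} {J K : Kd} (hA : TyFunctional E A J)
    (hJK : ∀ Γ' σ, SubstEq Γ' σ σ E → SubKd Γ' (J.psubst σ) (K.psubst σ)) :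
    TyFunctional E A K := by
  intro Γ' σ₁ σ₂ h
  have a := hA _ _ _ h
  have d₁ := hJK _ _ h.left
  exact ⟨.sub a.kinding₁ d₁, .sub a.kinding₂ (hJK _ _ h.right), .sub a.kinding₂₁ d₁,
    .sub a.le d₁, .sub a.ge d₁⟩

theorem toStar {A B C : Ty} (hA : TyFunctional E A (.intv B C))
    (hk : KdFunctional E (.intv B C)) : TyFunctional E A Kd.star := by
  intro Γ' σ₁ σ₂ h
  have a := hA _ _ _ h
  have k := hk.stable _ _ _ h
  exact ⟨a.kinding₁.toStar k.wf₁, a.kinding₂.toStar k.wf₂, a.kinding₂₁.toStar k.wf₁,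
    a.le.toStar a.kinding₁ a.kinding₂₁, a.ge.toStar a.kinding₂₁ a.kinding₁⟩

theorem sing {A B C : Ty} (hA : TyFunctional E A (.intv B C))
    (hk : KdFunctional E (.intv B C)) : TyFunctional E A (.intv A A) := by
  intro Γ' σ₁ σ₂ h
  have a := hA _ _ _ h
  have s := hA.toStar hk _ _ _ h
  exact ⟨.sing a.kinding₁, .sing a.kinding₂, .sub (.sing a.kinding₂₁) (.intv s.le s.ge),
    .sub (.intv a.le) (.intv (.refl s.kinding₁) s.ge),
    .sub (.intv a.ge) (.intv s.le (.refl s.kinding₁))⟩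

theorem arr {A B : Ty} (hA : TyFunctional E A Kd.star) (hB : TyFunctional E B Kd.star) :
    TyFunctional E (.arr A B) Kd.star := by
  intro Γ' σ₁ σ₂ h
  have a := hA _ _ _ h
  have b := hB _ _ _ h
  exact ⟨.arr a.kinding₁ b.kinding₁, .arr a.kinding₂ b.kinding₂, .arr a.kinding₂₁ b.kinding₂₁,
    .arr a.ge b.le, .arr a.le b.ge⟩

theorem all {K : Kd} {A : Ty} (hK : KdFunctional E K) (hA : TyFunctional (.ty K :: E) A Kd.star) :
    TyFunctional E (.all K A) Kd.star := by
  intro Γ' σ₁ σ₂ h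
  have eK := hK.stable _ _ _ h
  have a₁ := hA _ _ _ (h.liftLeft eK)
  have a₂ := hA _ _ _ (h.liftRight eK)
  have k₂ : Kinding Γ' ((Ty.all K A).psubst σ₂) Kd.star :=
    .all eK.wf₂ (hA _ _ _ (h.right.liftLeft (.refl eK.wf₂))).kinding₁
  have k₁ : Kinding Γ' ((Ty.all K A).psubst σ₁) Kd.star := .all eK.wf₁ a₁.kinding₁
  exact ⟨k₁, k₂, k₂, .all k₁ eK.ge a₂.le, .all k₂ eK.le a₁.ge⟩

theorem lam {J K : Kd} {A : Ty} (hJ : KdFunctional E J) (hA : TyFunctional (.ty J :: E) A K)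
    (hK : KdFunctional (.ty J :: E) K) : TyFunctional E (.lam J A) (.pi J K) := by
  intro Γ' σ₁ σ₂ h
  have eJ := hJ.stable _ _ _ h
  have a₁ := hA _ _ _ (h.liftLeft eJ)
  have k₁ : Kinding Γ' ((Ty.lam J A).psubst σ₁) ((Kd.pi J K).psubst σ₁) := .abs eJ.wf₁ a₁.kinding₁
  have k₂ : Kinding Γ' ((Ty.lam J A).psubst σ₂) ((Kd.pi J K).psubst σ₂) :=
    .abs eJ.wf₂ (hA _ _ _ (h.right.liftLeft (.refl eJ.wf₂))).kinding₁
  have wK : KdWf (.ty (J.psubst σ₂) :: Γ') (K.psubst σ₁.lift) :=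
    (hK.stable _ _ _ (h.left.lift (.refl eJ.wf₁) eJ.wf₂ eJ.ge eJ.ge)).wf₁
  have k₂₁ : Kinding Γ' ((Ty.lam J A).psubst σ₂) ((Kd.pi J K).psubst σ₁) :=
    .sub (.abs eJ.wf₂ (hA _ _ _ (h.liftRight eJ)).kinding₂₁)
      (.pi (.pi eJ.wf₂ wK) eJ.le (.refl (hK.stable _ _ _ (h.liftLeft eJ)).wf₁))
  exact ⟨k₁, k₂, k₂₁, .abs k₁ k₂₁ a₁.le, .abs k₂₁ k₁ a₁.ge⟩

theorem app {A B : Ty} {J K : Kd} (hA : TyFunctional E A (.pi J K)) (hP : KdFunctional E (.pi J K))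
    (hB : TyFunctional E B J) : TyFunctional E (.app A B) (K.subst 0 B) := by
  intro Γ' σ₁ σ₂ h
  have a := hA _ _ _ h
  have b := hB _ _ _ h
  have swap := hP.codomain.psubst_cons_le hP.domain h.left b.symm
  rw [Kd.subst_zero_psubst, Kd.subst_zero_psubst]
  exact ⟨.app_psubst a.kinding₁ b.kinding₁, .app_psubst a.kinding₂ b.kinding₂,
    .sub (.app_psubst a.kinding₂₁ b.kinding₂₁) swap, .app_psubst a.le (.antisym b.le b.ge),
    .sub (.app_psubst a.ge (.antisym b.ge b.le)) swap⟩

theorem eta {A : Ty} {J K : Kd} (hA : TyFunctional E A (.pi J K)) (hP : KdFunctional E (.pi J K)) :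
    TyFunctional E (.lam J (.app (A.shift 0) (.var 0))) (.pi J K) := by
  have hP' : KdFunctional (.ty J :: E) (.pi (J.shift 0) (K.shift 1)) := hP.weaken _
  have happ := app (hA.weaken (.ty J)) hP' (var (x := 0) rfl)
  rw [Kd.shift_one_subst_zero_var] at happ
  exact lam hP.domain happ hP.codomain

end TyFunctional

theorem SubTy.beta₁_psubst {Γ' : Ctx} {J K : Kd} {A B : Ty} {σ : Subst}
    (hA : Kinding (.ty (J.psubst σ) :: Γ') (A.psubst σ.lift) (K.psubst σ.lift))
    (hB : Kinding Γ' (B.psubst σ) (J.psubst σ)) :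
    SubTy Γ' ((Ty.app (.lam J A) B).psubst σ) ((A.subst 0 B).psubst σ)
      ((K.subst 0 B).psubst σ) := by
  rw [Ty.subst_zero_psubst, Kd.subst_zero_psubst, ← Ty.psubst_lift_subst_zero,
    ← Kd.psubst_lift_subst_zero]
  exact .beta₁ hA hB

theorem SubTy.beta₂_psubst {Γ' : Ctx} {J K : Kd} {A B : Ty} {σ : Subst}
    (hA : Kinding (.ty (J.psubst σ) :: Γ') (A.psubst σ.lift) (K.psubst σ.lift))
    (hB : Kinding Γ' (B.psubst σ) (J.psubst σ)) :
    SubTy Γ' ((A.subst 0 B).psubst σ) ((Ty.app (.lam J A) B).psubst σ)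
      ((K.subst 0 B).psubst σ) := by
  rw [Ty.subst_zero_psubst, Kd.subst_zero_psubst, ← Ty.psubst_lift_subst_zero,
    ← Kd.psubst_lift_subst_zero]
  exact .beta₂ hA hB

theorem SubTy.eta₁_psubst {Γ' : Ctx} {J K : Kd} {A : Ty} {σ : Subst}
    (hA : Kinding Γ' (A.psubst σ) ((Kd.pi J K).psubst σ)) :
    SubTy Γ' ((Ty.lam J (.app (A.shift 0) (.var 0))).psubst σ) (A.psubst σ)
      ((Kd.pi J K).psubst σ) := by
  have := SubTy.eta₁ hA
  rw [← Ty.shift_zero_psubst_lift] at this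
  exact this

theorem SubTy.eta₂_psubst {Γ' : Ctx} {J K : Kd} {A : Ty} {σ : Subst}
    (hA : Kinding Γ' (A.psubst σ) ((Kd.pi J K).psubst σ)) :
    SubTy Γ' (A.psubst σ) ((Ty.lam J (.app (A.shift 0) (.var 0))).psubst σ)
      ((Kd.pi J K).psubst σ) := by
  have := SubTy.eta₂ hA
  rw [← Ty.shift_zero_psubst_lift] at this
  exact this

mutual
theorem CtxWf.functional_lookup {E : Ctx} : CtxWf E →
    ∀ {x : ℕ} {K : Kd}, E[x]? = some (.ty K) → KdFunctional E (K.weaken (x + 1))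
  | .nil, _, _, h => by simp at h
  | .ty _ hK, 0, _, h => by cases h; rw [Kd.weaken_one]; exact hK.functional.weaken _
  | .ty hw _, x + 1, _, h => by rw [Kd.weaken_succ]; exact (hw.functional_lookup h).weaken _
  | .tm _ _, 0, _, h => by cases h
  | .tm hw _, x + 1, _, h => by rw [Kd.weaken_succ]; exact (hw.functional_lookup h).weaken _

theorem KdWf.functional {E : Ctx} {K : Kd} : KdWf E K → KdFunctional E K
  | .intv h₁ h₂ => .intv h₁.functional.1 h₂.functional.1
  | .pi h₁ h₂ => .pi h₁.functional h₂.functional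

theorem Kinding.functional {E : Ctx} {A : Ty} {K : Kd} :
    Kinding E A K → TyFunctional E A K ∧ KdFunctional E K
  | .var hw hx => ⟨.var hx, hw.functional_lookup hx⟩
  | .top _ => ⟨.top, .star⟩
  | .bot _ => ⟨.bot, .star⟩
  | .arr h₁ h₂ => ⟨.arr h₁.functional.1 h₂.functional.1, .star⟩
  | .abs h₁ h₂ => ⟨.lam h₁.functional h₂.functional.1 h₂.functional.2,
      .pi h₁.functional h₂.functional.2⟩
  | .sing h =>
      have ⟨hA, hk⟩ := h.functional
      ⟨hA.sing hk, .intv (hA.toStar hk) (hA.toStar hk)⟩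
  | .all h₁ h₂ => ⟨.all h₁.functional h₂.functional.1, .star⟩
  | .app h₁ h₂ =>
      have ⟨hA, hP⟩ := h₁.functional
      have hB := h₂.functional.1
      ⟨hA.app hP hB, hP.codomain.subst_zero hB hP.domain⟩
  | .sub h₁ h₂ =>
      have ⟨hsub, _, hK⟩ := h₂.functional
      ⟨h₁.functional.1.sub hsub, hK⟩

theorem SubKd.functional {E : Ctx} {J K : Kd} : SubKd E J K →
    (∀ Γ' σ, SubstEq Γ' σ σ E → SubKd Γ' (J.psubst σ) (K.psubst σ)) ∧
      KdFunctional E J ∧ KdFunctional E K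
  | .intv h₁ h₂ =>
      have ⟨s₁, hA₂, hA₁, _⟩ := h₁.functional
      have ⟨s₂, hB₁, hB₂, _⟩ := h₂.functional
      ⟨fun _ _ h => .intv (s₁ _ _ h) (s₂ _ _ h), .intv hA₁ hB₁, .intv hA₂ hB₂⟩
  | .pi hw h₁ h₂ =>
      have hP := hw.functional
      have ⟨s₁, hJ₂, _⟩ := h₁.functional
      have ⟨s₂, _, hK₂⟩ := h₂.functional
      ⟨fun _ _ h => .pi (hP.stable _ _ _ h).wf₁ (s₁ _ _ h)
          (s₂ _ _ (h.liftLeft (hJ₂.stable _ _ _ h))),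
        hP, .pi hJ₂ hK₂⟩

theorem SubTy.functional {E : Ctx} {A B : Ty} {K : Kd} : SubTy E A B K →
    (∀ Γ' σ, SubstEq Γ' σ σ E → SubTy Γ' (A.psubst σ) (B.psubst σ) (K.psubst σ)) ∧
      TyFunctional E A K ∧ TyFunctional E B K ∧ KdFunctional E K
  | .refl h =>
      have ⟨hA, hK⟩ := h.functional
      ⟨fun _ _ h => .refl (hA _ _ _ h).kinding₁, hA, hA, hK⟩
  | .trans h₁ h₂ =>
      have ⟨s₁, hA, _, hK⟩ := h₁.functional
      have ⟨s₂, _, hC, _⟩ := h₂.functional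
      ⟨fun _ _ h => .trans (s₁ _ _ h) (s₂ _ _ h), hA, hC, hK⟩
  | .top h =>
      have ⟨hA, hk⟩ := h.functional
      ⟨fun _ _ h => .top (hA _ _ _ h).kinding₁, hA.toStar hk, .top, .star⟩
  | .bot h =>
      have ⟨hA, hk⟩ := h.functional
      ⟨fun _ _ h => .bot (hA _ _ _ h).kinding₁, .bot, hA.toStar hk, .star⟩
  | .beta₁ h₁ h₂ =>
      have ⟨hA, hK⟩ := h₁.functional
      have ⟨hB, hJ⟩ := h₂.functional
      ⟨fun _ _ h => .beta₁_psubst (hA _ _ _ (h.liftLeft (hJ.stable _ _ _ h))).kinding₁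
          (hB _ _ _ h).kinding₁,
        (TyFunctional.lam hJ hA hK).app (.pi hJ hK) hB, hA.subst_zero hB hJ, hK.subst_zero hB hJ⟩
  | .beta₂ h₁ h₂ =>
      have ⟨hA, hK⟩ := h₁.functional
      have ⟨hB, hJ⟩ := h₂.functional
      ⟨fun _ _ h => .beta₂_psubst (hA _ _ _ (h.liftLeft (hJ.stable _ _ _ h))).kinding₁
          (hB _ _ _ h).kinding₁,
        hA.subst_zero hB hJ, (TyFunctional.lam hJ hA hK).app (.pi hJ hK) hB, hK.subst_zero hB hJ⟩
  | .eta₁ h =>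
      have ⟨hA, hP⟩ := h.functional
      ⟨fun _ _ h => .eta₁_psubst (hA _ _ _ h).kinding₁, hA.eta hP, hA, hP⟩
  | .eta₂ h =>
      have ⟨hA, hP⟩ := h.functional
      ⟨fun _ _ h => .eta₂_psubst (hA _ _ _ h).kinding₁, hA, hA.eta hP, hP⟩
  | .arr h₁ h₂ =>
      have ⟨s₁, hA₂, hA₁, _⟩ := h₁.functional
      have ⟨s₂, hB₁, hB₂, _⟩ := h₂.functional
      ⟨fun _ _ h => .arr (s₁ _ _ h) (s₂ _ _ h), .arr hA₁ hB₁, .arr hA₂ hB₂, .star⟩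
  | .abs h₁ h₂ h₃ =>
      have ⟨hA₁, hP⟩ := h₁.functional
      have hA₂ := h₂.functional.1
      have s := h₃.functional.1
      ⟨fun _ _ h => .abs (hA₁ _ _ _ h).kinding₁ (hA₂ _ _ _ h).kinding₁
          (s _ _ (h.liftLeft (hP.domain.stable _ _ _ h))),
        hA₁, hA₂, hP⟩
  | .all h₁ h₂ h₃ =>
      have hA₁ := h₁.functional.1
      have ⟨s₂, hK₂, _⟩ := h₂.functional
      have ⟨s₃, _, hA₂, _⟩ := h₃.functional
      ⟨fun _ _ h => .all (hA₁ _ _ _ h).kinding₁ (s₂ _ _ h)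
          (s₃ _ _ (h.liftLeft (hK₂.stable _ _ _ h))),
        hA₁, .all hK₂ hA₂, .star⟩
  | .app h (.antisym h₁ h₂) =>
      have ⟨s, hA₁, hA₂, hP⟩ := h.functional
      have ⟨t₁, hB₁, hB₂, _⟩ := h₁.functional
      have t₂ := h₂.functional.1
      ⟨fun _ _ h => by
          rw [Kd.subst_zero_psubst]
          exact .app_psubst (s _ _ h) (.antisym (t₁ _ _ h) (t₂ _ _ h)),
        hA₁.app hP hB₁,
        (hA₂.app hP hB₂).sub fun _ _ h => by
          rw [Kd.subst_zero_psubst, Kd.subst_zero_psubst]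
          exact hP.codomain.psubst_cons_le hP.domain h
            ⟨(hB₂ _ _ _ h).kinding₁, (hB₁ _ _ _ h).kinding₁, (hB₁ _ _ _ h).kinding₁,
              t₂ _ _ h, t₁ _ _ h⟩,
        hP.codomain.subst_zero hB₁ hP.domain⟩
  | .bnd₁ h =>
      have ⟨hA, hk⟩ := h.functional
      ⟨fun _ _ h => .bnd₁ (hA _ _ _ h).kinding₁, hk.intv_inv.1, hA.toStar hk, .star⟩
  | .bnd₂ h =>
      have ⟨hA, hk⟩ := h.functional
      ⟨fun _ _ h => .bnd₂ (hA _ _ _ h).kinding₁, hA.toStar hk, hk.intv_inv.2, .star⟩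
  | .intv h =>
      have ⟨s, hA₁, hA₂, hk⟩ := h.functional
      have s' : ∀ Γ' σ, SubstEq Γ' σ σ E → SubTy Γ' (A.psubst σ) (B.psubst σ) Kd.star :=
        fun _ _ h => (s _ _ h).toStar (hA₁ _ _ _ h).kinding₁ (hA₂ _ _ _ h).kinding₁
      ⟨fun _ _ h => .intv (s _ _ h),
        (hA₁.sing hk).sub fun _ _ h => .intv (.refl ((hA₁.toStar hk) _ _ _ h).kinding₁) (s' _ _ h),
        (hA₂.sing hk).sub fun _ _ h => .intv (s' _ _ h) (.refl ((hA₂.toStar hk) _ _ _ h).kinding₁),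
        .intv (hA₁.toStar hk) (hA₂.toStar hk)⟩
  | .sub h₁ h₂ =>
      have ⟨s₁, hA, hB, _⟩ := h₁.functional
      have ⟨s₂, _, hK⟩ := h₂.functional
      ⟨fun _ _ h => .sub (s₁ _ _ h) (s₂ _ _ h), hA.sub s₂, hB.sub s₂, hK⟩
end

theorem Kinding.valid {Γ : Ctx} {A : Ty} {K : Kd} (h : Kinding Γ A K) : KdWf Γ K :=
  h.functional.2.kdWf h.ctxWf

theorem SubKd.valid {Γ : Ctx} {J K : Kd} (h : SubKd Γ J K) : KdWf Γ J ∧ KdWf Γ K :=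
  ⟨h.functional.2.1.kdWf h.ctxWf, h.functional.2.2.kdWf h.ctxWf⟩

theorem SubTy.valid {Γ : Ctx} {A B : Ty} {K : Kd} (h : SubTy Γ A B K) :
    Kinding Γ A K ∧ Kinding Γ B K :=
  ⟨h.functional.2.1.kinding h.ctxWf, h.functional.2.2.1.kinding h.ctxWf⟩

theorem KdEq.valid {Γ : Ctx} {J K : Kd} : KdEq Γ J K → KdWf Γ J ∧ KdWf Γ K
  | .antisym h _ => h.valid

theorem TyEq.valid {Γ : Ctx} {A B : Ty} {K : Kd} : TyEq Γ A B K → Kinding Γ A K ∧ Kinding Γ B K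
  | .antisym h _ => h.valid

theorem Kinding.subst_zero {Γ : Ctx} {J K : Kd} {A B : Ty} (hA : Kinding (.ty J :: Γ) A K)
    (hB : Kinding Γ B J) : Kinding Γ (A.subst 0 B) (K.subst 0 B) :=
  (hA.functional.1.subst_zero hB.functional.1 hB.functional.2).kinding hB.ctxWf

theorem Kinding.arr_inv {Γ : Ctx} {T A B : Ty} {K : Kd} :
    Kinding Γ T K → T = .arr A B → Kinding Γ A Kd.star ∧ Kinding Γ B Kd.star
  | .arr h₁ h₂, rfl => ⟨h₁, h₂⟩
  | .sing h, e => h.arr_inv e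
  | .sub h _, e => h.arr_inv e

theorem Kinding.all_inv {Γ : Ctx} {T A : Ty} {J K : Kd} :
    Kinding Γ T K → T = .all J A → Kinding (.ty J :: Γ) A Kd.star
  | .all _ h, rfl => h
  | .sing h, e => h.all_inv e
  | .sub h _, e => h.all_inv e

theorem Typing.valid {Γ : Ctx} {t : Tm} {A : Ty} : Typing Γ t A → Kinding Γ A Kd.star
  | .var hw hx => hw.kinding_lookup hx
  | .abs h₁ h₂ _ => .arr h₁ h₂
  | .app h _ => (h.valid.arr_inv rfl).2
  | .tabs hK h => .all hK h.valid
  | .tapp h hB => (h.valid.all_inv rfl).subst_zero hB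
  | .sub _ h => h.valid.2

/-- **Validity of the declarative judgments**: (1) kinding validity, (2) typing
validity, (3) kind (in)equation validity, (4) type (in)equation validity. -/
theorem validity :
    (∀ (Γ : Ctx) (A : Ty) (K : Kd), Kinding Γ A K → KdWf Γ K) ∧
    (∀ (Γ : Ctx) (t : Tm) (A : Ty), Typing Γ t A → Kinding Γ A Kd.star) ∧
    (∀ (Γ : Ctx) (J K : Kd), SubKd Γ J K ∨ KdEq Γ J K → KdWf Γ J ∧ KdWf Γ K) ∧
    (∀ (Γ : Ctx) (A B : Ty) (K : Kd), SubTy Γ A B K ∨ TyEq Γ A B K →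
      Kinding Γ A K ∧ Kinding Γ B K) :=
  ⟨fun _ _ _ h => h.valid, fun _ _ _ h => h.valid,
    fun _ _ _ h => h.elim SubKd.valid KdEq.valid, fun _ _ _ _ h => h.elim SubTy.valid TyEq.valid⟩
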